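/- Let l ∈ {K, K4, KD4, S4}, let φ be a modal formula, and let S be a view (with respect to φ) that is consistent for l and that completes itself. If th(p(S)) is complete for l, then for every child c ∈ C(S), th(c) is complete for l. -/

import Mathlib

/-- Modal formulas in negation normal form, as in the paper:
φ ::= ⊥ | ⊤ | p | ¬p | φ∧φ | φ∨φ | □φ | ◇φ. -/
inductive Form : Type where
  | bot : Form
  | top : Form
  | pos : ℕ → Form
  | npos : ℕ → Form
  | and : Form → Form → Form
  | or : Form → Form → Form
  | box : Form → Form
  | dia : Form → Form
deriving DecidableEq

namespace Form

/-- Negation, defined as usual (by De Morgan dualities). -/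
def neg : Form → Form
  | bot => top
  | top => bot
  | pos p => npos p
  | npos p => pos p
  | and φ ψ => or φ.neg ψ.neg
  | or φ ψ => and φ.neg ψ.neg
  | box φ => dia φ.neg
  | dia φ => box φ.neg

/-- Implication φ → ψ, defined as usual. -/
def imp (φ ψ : Form) : Form := or φ.neg ψ

/-- Bi-implication φ ↔ ψ, defined as usual. -/
def biimp (φ ψ : Form) : Form := and (imp φ ψ) (imp ψ φ)

/-- P(φ): the set of propositional variables occurring in φ. -/
def vars : Form → Finset ℕ
  | bot => ∅
  | top => ∅
  | pos p => {p}
  | npos p => {p}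
  | and φ ψ => φ.vars ∪ ψ.vars
  | or φ ψ => φ.vars ∪ ψ.vars
  | box φ => φ.vars
  | dia φ => φ.vars

/-- Modal depth. -/
def md : Form → ℕ
  | bot => 0
  | top => 0
  | pos _ => 0
  | npos _ => 0
  | and φ ψ => max φ.md ψ.md
  | or φ ψ => max φ.md ψ.md
  | box φ => φ.md + 1
  | dia φ => φ.md + 1

/-- sub(φ): the set of subformulas of φ. -/
def subf : Form → Finset Form
  | bot => {bot}
  | top => {top}
  | pos p => {pos p}
  | npos p => {npos p}
  | and φ ψ => insert (and φ ψ) (φ.subf ∪ ψ.subf)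
  | or φ ψ => insert (or φ ψ) (φ.subf ∪ ψ.subf)
  | box φ => insert (box φ) φ.subf
  | dia φ => insert (dia φ) φ.subf

/-- s̄ub(φ) = sub(φ) ∪ {¬ψ : ψ ∈ sub(φ)}. -/
def subBar (φ : Form) : Finset Form := φ.subf ∪ φ.subf.image neg

/-- □^k φ : k nested boxes. -/
def boxIter : ℕ → Form → Form
  | 0, φ => φ
  | n + 1, φ => box (boxIter n φ)

def isDia : Form → Bool
  | dia _ => true
  | _ => false

def isBox : Form → Bool
  | box _ => true
  | _ => false

end Form

/-- Big conjunction over a finite set of formulas (⋀∅ = ⊤). -/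
noncomputable def bigAnd (s : Finset Form) : Form := s.toList.foldr Form.and Form.top

/-- Big disjunction over a finite set of formulas (⋁∅ = ⊥). -/
noncomputable def bigOr (s : Finset Form) : Form := s.toList.foldr Form.or Form.bot

/-- th(a) = ⋀ a. -/
noncomputable def th (a : Finset Form) : Form := bigAnd a

/-- A finite Kripke model: a nonempty finite set of states, an accessibility
relation and a valuation. -/
structure Model : Type 1 where
  W : Type
  nonempty : Nonempty W
  finite : Finite W
  R : W → W → Prop
  V : W → Set ℕ

/-- Satisfaction M,w ⊨ φ. -/
def Model.sat (M : Model) : M.W → Form → Prop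
  | _, .bot => False
  | _, .top => True
  | w, .pos p => p ∈ M.V w
  | w, .npos p => p ∉ M.V w
  | w, .and φ ψ => M.sat w φ ∧ M.sat w ψ
  | w, .or φ ψ => M.sat w φ ∨ M.sat w ψ
  | w, .box φ => ∀ v, M.R w v → M.sat v φ
  | w, .dia φ => ∃ v, M.R w v ∧ M.sat v φ

/-- The six base logics K, D, T, K4, KD4, S4. -/
inductive BaseLogic : Type where
  | K | D | T | K4 | KD4 | S4
deriving DecidableEq

/-- A logic: a base logic, possibly extended by axiom 5. -/
structure Logic : Type where
  base : BaseLogic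
  has5 : Bool
deriving DecidableEq

def Logic.K : Logic := ⟨.K, false⟩
def Logic.D : Logic := ⟨.D, false⟩
def Logic.T : Logic := ⟨.T, false⟩
def Logic.K4 : Logic := ⟨.K4, false⟩
def Logic.KD4 : Logic := ⟨.KD4, false⟩
def Logic.S4 : Logic := ⟨.S4, false⟩

/-- l + 5. -/
def BaseLogic.plus5 (b : BaseLogic) : Logic := ⟨b, true⟩

/-- M is a model for the logic l (frame conditions). -/
def Model.IsFor (M : Model) (l : Logic) : Prop :=
  (match l.base with
    | .K => True
    | .D => ∀ w, ∃ v, M.R w v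
    | .T => ∀ w, M.R w w
    | .K4 => ∀ a b c, M.R a b → M.R b c → M.R a c
    | .KD4 => (∀ w, ∃ v, M.R w v) ∧ (∀ a b c, M.R a b → M.R b c → M.R a c)
    | .S4 => (∀ w, M.R w w) ∧ (∀ a b c, M.R a b → M.R b c → M.R a c))
  ∧ (l.has5 = true → ∀ a b c, M.R a b → M.R a c → M.R b c)

/-- φ is satisfiable for l: satisfied at some state of some finite model for l. -/
def Satisfiable (l : Logic) (φ : Form) : Prop :=
  ∃ M : Model, M.IsFor l ∧ ∃ w : M.W, M.sat w φ

/-- φ is valid for l: satisfied at every state of every finite model for l. -/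
def Valid (l : Logic) (φ : Form) : Prop :=
  ∀ M : Model, M.IsFor l → ∀ w : M.W, M.sat w φ

/-- φ is complete for l: for every ψ ∈ L(P(φ)), φ→ψ or φ→¬ψ is valid for l. -/
def Complete (l : Logic) (φ : Form) : Prop :=
  ∀ ψ : Form, ψ.vars ⊆ φ.vars → (Valid l (φ.imp ψ) ∨ Valid l (φ.imp ψ.neg))

/-- Z is a bisimulation modulo P from M to M'. -/
def IsBisim (P : Set ℕ) (M M' : Model) (Z : M.W → M'.W → Prop) : Prop :=
  (∃ s s', Z s s') ∧
  ∀ s s', Z s s' →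
    (M.V s ∩ P = M'.V s' ∩ P) ∧
    (∀ t, M.R s t → ∃ t', M'.R s' t' ∧ Z t t') ∧
    (∀ t', M'.R s' t' → ∃ t, M.R s t ∧ Z t t')

/-- (M,a) ∼_P (M',a'). -/
def Bisimilar (P : Set ℕ) (M : Model) (a : M.W) (M' : Model) (a' : M'.W) : Prop :=
  ∃ Z, IsBisim P M M' Z ∧ Z a a'

/-- (M,a) ≡_P (M',a'): the two pointed models satisfy the same formulas of L(P). -/
def EquivP (P : Set ℕ) (M : Model) (a : M.W) (M' : Model) (a' : M'.W) : Prop :=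
  ∀ φ : Form, ↑φ.vars ⊆ P → (M.sat a φ ↔ M'.sat a' φ)

/-- (M,s) is flat (for base logic l, with axiom 5): the carrier is {s}∪W and
R = R1 ∪ R2 with R1 ⊆ {s}×W, R2 an equivalence relation on W, and s ∈ W if
l ∈ {T,S4}. -/
def Flat (l : BaseLogic) (M : Model) (s : M.W) : Prop :=
  ∃ W : Set M.W, (∀ w, w = s ∨ w ∈ W) ∧
    ∃ R1 R2 : M.W → M.W → Prop,
      (∀ x y, M.R x y ↔ (R1 x y ∨ R2 x y)) ∧
      (∀ x y, R1 x y → x = s ∧ y ∈ W) ∧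
      (∀ x y, R2 x y → x ∈ W ∧ y ∈ W) ∧
      (∀ x ∈ W, R2 x x) ∧
      (∀ x y, R2 x y → R2 y x) ∧
      (∀ x y z, R2 x y → R2 y z → R2 x z) ∧
      ((l = .T ∨ l = .S4) → s ∈ W)

/-- A maximal state for l with respect to φ: a maximally l-consistent subset
of s̄ub(φ). -/
def MaxState (l : Logic) (φ : Form) (a : Finset Form) : Prop :=
  a ⊆ φ.subBar ∧ Satisfiable l (th a) ∧ ∀ ψ ∈ φ.subf, ψ ∈ a ∨ ψ.neg ∈ a

/-- D(x) = {◇ψ : ◇ψ ∈ x}. -/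
def DSet (x : Finset Form) : Finset Form := x.filter (fun ψ => ψ.isDia = true)

/-- B(x) = {□ψ : □ψ ∈ x}. -/
def BSet (x : Finset Form) : Finset Form := x.filter (fun ψ => ψ.isBox = true)

/-- A view: a parent-state and a finite set of children-states. -/
structure View : Type where
  parent : Finset Form
  children : Finset (Finset Form)

/-- The view is with respect to φ: all its states are subsets of s̄ub(φ). -/
def View.WF (φ : Form) (S : View) : Prop :=
  S.parent ⊆ φ.subBar ∧ ∀ c ∈ S.children, c ⊆ φ.subBar

/-- A set of formulas is l-closed. -/
def LClosed (l : Logic) (P : Finset ℕ) (s : Finset Form) : Prop :=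
  (∀ φ1 φ2 : Form, Form.and φ1 φ2 ∈ s → φ1 ∈ s ∧ φ2 ∈ s) ∧
  (∀ φ1 φ2 : Form, Form.or φ1 φ2 ∈ s → φ1 ∈ s ∨ φ2 ∈ s) ∧
  ((l.base = .T ∨ l.base = .S4) → ∀ ψ : Form, Form.box ψ ∈ s → ψ ∈ s) ∧
  (∀ p ∈ P, Form.pos p ∈ s ∨ Form.npos p ∈ s)

/-- The view S is l-complete. -/
def ViewLComplete (l : Logic) (P : Finset ℕ) (S : View) : Prop :=
  LClosed l P S.parent ∧
  (∀ c ∈ S.children, LClosed l P c) ∧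
  (∀ ψ : Form, Form.dia ψ ∈ S.parent → ∃ c ∈ S.children, ψ ∈ c) ∧
  (∀ ψ : Form, Form.box ψ ∈ S.parent → ∀ c ∈ S.children, ψ ∈ c) ∧
  ((l.base = .K4 ∨ l.base = .KD4 ∨ l.base = .S4) →
    ∀ ψ : Form, Form.box ψ ∈ S.parent → ∀ c ∈ S.children, Form.box ψ ∈ c) ∧
  (l.base = .KD4 → S.children.Nonempty)

/-- The view S is consistent for l: every one of its states is consistent. -/
def ViewConsistent (l : Logic) (S : View) : Prop :=
  Satisfiable l (th S.parent) ∧ ∀ c ∈ S.children, Satisfiable l (th c)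

/-- d = max{md(th(c')) : c' ∈ C(S)}. -/
noncomputable def childDepth (S : View) : ℕ := S.children.sup (fun c => (th c).md)

/-- A K-maximal child-state: a maximally K-consistent subset of s̄ub_d(φ). -/
def KMaxChild (φ : Form) (d : ℕ) (c : Finset Form) : Prop :=
  c ⊆ φ.subBar.filter (fun ψ => ψ.md ≤ d) ∧
  Satisfiable Logic.K (th c) ∧
  ∀ ψ ∈ φ.subf, ψ.md ≤ d → (ψ ∈ c ∨ ψ.neg ∈ c)

/-- S' completes S (for logic l, with respect to φ). -/
def ViewCompletes (l : Logic) (φ : Form) (S' S : View) : Prop :=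
  ViewLComplete l φ.vars S' ∧
  S.parent ⊆ S'.parent ∧
  (∀ a ∈ S.children, ∃ a' ∈ S'.children, a ⊆ a') ∧
  (l.base = .K → ∀ a' ∈ S'.children, KMaxChild φ (childDepth S') a') ∧
  (l.base ≠ .K → ∀ a' ∈ S'.children, MaxState l φ a')

/-- The depth-0 normal form ⋀_{p∈S} p ∧ ⋀_{p∈P∖S} ¬p. -/
noncomputable def nf0 (P S : Finset ℕ) : Form :=
  Form.and (bigAnd (S.image Form.pos)) (bigAnd ((P \ S).image Form.npos))

/-- Fine's normal forms F_P^d. -/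
noncomputable def NF (P : Finset ℕ) : ℕ → Set Form
  | 0 => { χ | ∃ S ⊆ P, χ = nf0 P S }
  | d + 1 => { χ | ∃ S : Finset Form, ↑S ⊆ NF P d ∧ ∃ S0 ⊆ P,
      χ = Form.and (nf0 P S0)
            (Form.and (bigAnd (S.image Form.dia)) (Form.box (bigOr S))) }

/-- φ is complete up to its depth for l. -/
def CompleteUpToDepth (l : Logic) (φ : Form) : Prop :=
  ∀ ψ : Form, ψ.vars ⊆ φ.vars → ψ.md ≤ φ.md →
    (Valid l (φ.imp ψ) ∨ Valid l (φ.imp ψ.neg))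

/-!
Write `α = th(p(S))` and `θ = th(c)`. For `ψ` over the variables of `θ`, completeness of `α`
decides `□(θ → ψ)`. Any pointed model of `θ` can be hung below a fresh root satisfying `α`
(a root placed under models of all children of `S`), so if `α` forces `□(θ → ψ)` then `θ`
forces `ψ`. Otherwise `α` forces `◇(θ ∧ ¬ψ)`, and this cannot happen for both `ψ` and `¬ψ`,
because some model of `α` has a root with at most one `θ`-successor: for K the same rooted sum,
in which K-maximality makes the theories of distinct children contradictory; for K4, KD4 and S4
the canonical model over the maximal states, in which every maximal state holds at one point only.
-/

namespace Form

@[simp]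
theorem neg_neg (ψ : Form) : ψ.neg.neg = ψ := by
  induction ψ <;> simp_all [neg]

@[simp]
theorem vars_neg (ψ : Form) : ψ.neg.vars = ψ.vars := by
  induction ψ <;> simp_all [neg, vars]

@[simp]
theorem md_neg (ψ : Form) : ψ.neg.md = ψ.md := by
  induction ψ <;> simp_all [neg, md]

@[simp]
theorem mem_subf_self (ψ : Form) : ψ ∈ ψ.subf := by
  cases ψ <;> simp [subf]

theorem subf_subset_of_mem {φ ψ : Form} (h : ψ ∈ φ.subf) : ψ.subf ⊆ φ.subf := by
  induction φ with
  | and a b iha ihb | or a b iha ihb =>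
    simp only [subf, Finset.mem_insert, Finset.mem_union] at h
    rcases h with rfl | h | h
    · exact subset_rfl
    · exact (iha h).trans (by intro x; simp [subf]; tauto)
    · exact (ihb h).trans (by intro x; simp [subf]; tauto)
  | box a ih | dia a ih =>
    simp only [subf, Finset.mem_insert] at h
    rcases h with rfl | h
    · exact subset_rfl
    · exact (ih h).trans (Finset.subset_insert _ _)
  | _ => simp only [subf, Finset.mem_singleton] at h; subst h; exact subset_rfl

theorem vars_subset_of_mem_subf {φ ψ : Form} (h : ψ ∈ φ.subf) : ψ.vars ⊆ φ.vars := by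
  induction φ with
  | and a b iha ihb | or a b iha ihb =>
    simp only [subf, Finset.mem_insert, Finset.mem_union] at h
    rcases h with rfl | h | h
    · exact subset_rfl
    · exact (iha h).trans Finset.subset_union_left
    · exact (ihb h).trans Finset.subset_union_right
  | box a ih | dia a ih =>
    simp only [subf, Finset.mem_insert] at h
    rcases h with rfl | h
    · exact subset_rfl
    · exact ih h
  | _ => simp only [subf, Finset.mem_singleton] at h; subst h; exact subset_rfl

theorem neg_mem_subf_of_mem_subf_neg {η ν : Form} (h : ν ∈ η.neg.subf) : ν.neg ∈ η.subf := by
  induction η with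
  | and a b iha ihb | or a b iha ihb =>
    simp only [neg, subf, Finset.mem_insert, Finset.mem_union] at h ⊢
    rcases h with rfl | h | h
    · simp [neg]
    · exact Or.inr (Or.inl (iha h))
    · exact Or.inr (Or.inr (ihb h))
  | box a ih | dia a ih =>
    simp only [neg, subf, Finset.mem_insert] at h ⊢
    rcases h with rfl | h
    · simp [neg]
    · exact Or.inr (ih h)
  | _ => simp only [neg, subf, Finset.mem_singleton] at h; subst h; simp [neg, subf]

theorem mem_subBar_iff {φ η : Form} : η ∈ φ.subBar ↔ η ∈ φ.subf ∨ η.neg ∈ φ.subf := by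
  simp only [subBar, Finset.mem_union, Finset.mem_image]
  refine or_congr_right ⟨?_, fun h => ⟨η.neg, h, neg_neg η⟩⟩
  rintro ⟨ν, hν, rfl⟩
  rwa [neg_neg]

theorem vars_subset_of_mem_subBar {φ η : Form} (h : η ∈ φ.subBar) : η.vars ⊆ φ.vars := by
  rcases mem_subBar_iff.1 h with h | h
  · exact vars_subset_of_mem_subf h
  · simpa using vars_subset_of_mem_subf h

theorem subf_subset_subBar {φ η : Form} (h : η ∈ φ.subBar) : η.subf ⊆ φ.subBar := by
  intro ν hν
  rcases mem_subBar_iff.1 h with h | h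
  · exact mem_subBar_iff.2 (Or.inl (subf_subset_of_mem h hν))
  · rw [← neg_neg η] at hν
    exact mem_subBar_iff.2 (Or.inr (subf_subset_of_mem h (neg_mem_subf_of_mem_subf_neg hν)))

end Form

namespace Model

variable (M : Model)

theorem sat_neg (ψ : Form) (w : M.W) : M.sat w ψ.neg ↔ ¬M.sat w ψ := by
  induction ψ generalizing w <;> simp_all [Form.neg, Model.sat]
  tauto

theorem sat_imp (w : M.W) (x y : Form) : M.sat w (x.imp y) ↔ (M.sat w x → M.sat w y) := by
  simp only [Form.imp, Model.sat, sat_neg]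
  tauto

theorem sat_neg_box_imp (w : M.W) (x y : Form) :
    M.sat w (Form.box (x.imp y)).neg ↔ ∃ u, M.R w u ∧ M.sat u x ∧ ¬M.sat u y := by
  simp only [sat_neg, Model.sat, sat_imp, not_forall, exists_prop]

theorem sat_th (w : M.W) (a : Finset Form) : M.sat w (th a) ↔ ∀ η ∈ a, M.sat w η := by
  suffices ∀ L : List Form, M.sat w (L.foldr Form.and Form.top) ↔ ∀ η ∈ L, M.sat w η by
    simp [th, bigAnd, this]
  intro L
  induction L <;> simp_all [Model.sat]

end Model

theorem vars_th_subset {a : Finset Form} {X : Finset ℕ} (h : ∀ η ∈ a, η.vars ⊆ X) :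
    (th a).vars ⊆ X := by
  suffices ∀ L : List Form, (∀ η ∈ L, η.vars ⊆ X) → (L.foldr Form.and Form.top).vars ⊆ X from
    this _ (by simpa using h)
  intro L
  induction L <;> simp_all [Form.vars, Finset.union_subset_iff]

theorem vars_subset_vars_th {a : Finset Form} {η : Form} (h : η ∈ a) : η.vars ⊆ (th a).vars := by
  suffices ∀ L : List Form, η ∈ L → η.vars ⊆ (L.foldr Form.and Form.top).vars from
    this _ (by simpa using h)
  intro L
  induction L with
  | nil => simp
  | cons x L ih =>
    intro h
    rcases List.mem_cons.1 h with rfl | h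
    · exact Finset.subset_union_left
    · exact (ih h).trans Finset.subset_union_right

theorem valid_imp_iff {l : Logic} {x y : Form} :
    Valid l (x.imp y) ↔ ∀ M : Model, M.IsFor l → ∀ w, M.sat w x → M.sat w y := by
  simp only [Valid, Model.sat_imp]

theorem Complete.of_successor {l : Logic} {α θ : Form} (hα : Complete l α)
    (hvars : θ.vars ⊆ α.vars)
    (hembed : ∀ N : Model, N.IsFor l → ∀ v, N.sat v θ →
      ∃ M : Model, M.IsFor l ∧ ∃ r u, M.sat r α ∧ M.R r u ∧ ∀ χ, M.sat u χ ↔ N.sat v χ)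
    (hunique : ∃ M : Model, M.IsFor l ∧ ∃ r, M.sat r α ∧ {u | M.R r u ∧ M.sat u θ}.Subsingleton) :
    Complete l θ := by
  have forced : ∀ ξ : Form, ξ.vars ⊆ θ.vars →
      Valid l (θ.imp ξ) ∨ Valid l (α.imp (Form.box (θ.imp ξ)).neg) := by
    intro ξ hξ
    have hΛ : (Form.box (θ.imp ξ)).vars ⊆ α.vars := by
      simpa [Form.imp, Form.vars] using Finset.union_subset hvars (hξ.trans hvars)
    refine (hα _ hΛ).imp_left fun h => valid_imp_iff.2 fun N hN v hv => ?_
    obtain ⟨M, hM, r, u, hr, hru, hu⟩ := hembed N hN v hv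
    have hbox := valid_imp_iff.1 h M hM r hr u hru
    exact (hu ξ).1 ((M.sat_imp u θ ξ).1 hbox ((hu θ).2 hv))
  intro ψ hψ
  obtain ⟨M, hM, r, hr, hsub⟩ := hunique
  refine (forced ψ hψ).imp_right fun hψ' => (forced ψ.neg (by simpa using hψ)).resolve_right ?_
  intro hneg
  obtain ⟨u, hru, hu, hnψ⟩ := (M.sat_neg_box_imp r θ ψ).1 (valid_imp_iff.1 hψ' M hM r hr)
  obtain ⟨u', hru', hu', hψu'⟩ := (M.sat_neg_box_imp r θ ψ.neg).1 (valid_imp_iff.1 hneg M hM r hr)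
  obtain rfl : u = u' := hsub ⟨hru, hu⟩ ⟨hru', hu'⟩
  exact hψu' ((M.sat_neg ψ u).2 hnψ)

theorem mem_or_neg_mem_of_mem_subBar {φ η : Form} {a : Finset Form} {d : ℕ}
    (hdec : ∀ ψ ∈ φ.subf, ψ.md ≤ d → ψ ∈ a ∨ ψ.neg ∈ a) (hη : η ∈ φ.subBar) (hd : η.md ≤ d) :
    η ∈ a ∨ η.neg ∈ a := by
  rcases Form.mem_subBar_iff.1 hη with h | h
  · exact hdec η h hd
  · simpa [or_comm] using hdec η.neg h (by simpa using hd)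

theorem MaxState.mem_or_neg_mem {l : Logic} {φ η : Form} {a : Finset Form} (ha : MaxState l φ a)
    (hη : η ∈ φ.subBar) : η ∈ a ∨ η.neg ∈ a :=
  mem_or_neg_mem_of_mem_subBar (fun ψ hψ _ => ha.2.2 ψ hψ) hη le_rfl

theorem MaxState.mem_of_sat {l : Logic} {φ η : Form} {a : Finset Form} (ha : MaxState l φ a)
    (hη : η ∈ φ.subBar) {M : Model} {w : M.W} (hw : M.sat w (th a)) (hηw : M.sat w η) : η ∈ a :=
  (ha.mem_or_neg_mem hη).resolve_right fun h => (M.sat_neg η w).1 ((M.sat_th w a).1 hw _ h) hηw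

theorem eq_of_sat_th_of_decides {M : Model} {w : M.W} {a b : Finset Form}
    (hab : ∀ η ∈ a, η ∈ b ∨ η.neg ∈ b) (hba : ∀ η ∈ b, η ∈ a ∨ η.neg ∈ a)
    (ha : M.sat w (th a)) (hb : M.sat w (th b)) : a = b := by
  have key : ∀ {a b : Finset Form}, (∀ η ∈ a, η ∈ b ∨ η.neg ∈ b) → M.sat w (th a) →
      M.sat w (th b) → a ⊆ b := fun hab ha hb η hη =>
    (hab η hη).resolve_right fun h => (M.sat_neg η w).1 ((M.sat_th w _).1 hb _ h)
      ((M.sat_th w _).1 ha _ hη)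
  exact (key hab ha hb).antisymm (key hba hb ha)

theorem MaxState.eq_of_sat_th {l : Logic} {φ : Form} {a b : Finset Form} (ha : MaxState l φ a)
    (hb : MaxState l φ b) {M : Model} {w : M.W} (hwa : M.sat w (th a)) (hwb : M.sat w (th b)) :
    a = b :=
  eq_of_sat_th_of_decides (fun _ hη => hb.mem_or_neg_mem (ha.1 hη))
    (fun _ hη => ha.mem_or_neg_mem (hb.1 hη)) hwa hwb

theorem KMaxChild.mem_or_neg_mem {φ η : Form} {d : ℕ} {a b : Finset Form} (ha : KMaxChild φ d a)
    (hb : KMaxChild φ d b) (hη : η ∈ a) : η ∈ b ∨ η.neg ∈ b := by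
  have := ha.1 hη
  rw [Finset.mem_filter] at this
  exact mem_or_neg_mem_of_mem_subBar hb.2.2 this.1 this.2

theorem KMaxChild.eq_of_sat_th {φ : Form} {d : ℕ} {a b : Finset Form} (ha : KMaxChild φ d a)
    (hb : KMaxChild φ d b) {M : Model} {w : M.W} (hwa : M.sat w (th a)) (hwb : M.sat w (th b)) :
    a = b :=
  eq_of_sat_th_of_decides (fun _ => ha.mem_or_neg_mem hb) (fun _ => hb.mem_or_neg_mem ha) hwa hwb

structure PointedModel : Type 1 where
  M : Model
  pt : M.W

section RootedSum

variable {ι : Type} (F : ι → PointedModel) (tr rf : Prop)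

/-- A fresh root `none` below the disjoint union of the models `F i`; `tr` makes the root see
the successors of the distinguished points, `rf` makes it reflexive. -/
inductive RootedSumR : Option (Σ i, (F i).M.W) → Option (Σ i, (F i).M.W) → Prop
  | root_pt (i : ι) : RootedSumR none (some ⟨i, (F i).pt⟩)
  | root_succ (i : ι) (y : (F i).M.W) : tr → (F i).M.R (F i).pt y → RootedSumR none (some ⟨i, y⟩)
  | root_root : rf → RootedSumR none none
  | inner (i : ι) (x y : (F i).M.W) : (F i).M.R x y → RootedSumR (some ⟨i, x⟩) (some ⟨i, y⟩)

def rootedSum [Finite ι] (V₀ : Set ℕ) : Model where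
  W := Option (Σ i, (F i).M.W)
  nonempty := ⟨none⟩
  finite := by
    have := fun i => (F i).M.finite
    infer_instance
  R := RootedSumR F tr rf
  V
    | none => V₀
    | some q => (F q.1).M.V q.2

variable [Finite ι] (V₀ : Set ℕ)

theorem rootedSum_R_some_iff (i : ι) (x : (F i).M.W) (b : (rootedSum F tr rf V₀).W) :
    (rootedSum F tr rf V₀).R (some ⟨i, x⟩) b ↔ ∃ y, b = some ⟨i, y⟩ ∧ (F i).M.R x y := by
  constructor
  · rintro ⟨⟩
    exact ⟨_, rfl, ‹_›⟩
  · rintro ⟨y, rfl, h⟩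
    exact .inner i x y h

theorem rootedSum_sat_some (i : ι) (η : Form) (x : (F i).M.W) :
    (rootedSum F tr rf V₀).sat (some ⟨i, x⟩) η ↔ (F i).M.sat x η := by
  induction η generalizing x with
  | box a ih =>
    simp only [Model.sat]
    refine ⟨fun h y hy => (ih y).1 (h _ ((rootedSum_R_some_iff ..).2 ⟨y, rfl, hy⟩)), ?_⟩
    intro h b hb
    obtain ⟨y, rfl, hy⟩ := (rootedSum_R_some_iff ..).1 hb
    exact (ih y).2 (h y hy)
  | dia a ih =>
    simp only [Model.sat]
    constructor
    · rintro ⟨b, hb, hsat⟩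
      obtain ⟨y, rfl, hy⟩ := (rootedSum_R_some_iff ..).1 hb
      exact ⟨y, hy, (ih y).1 hsat⟩
    · rintro ⟨y, hy, hsat⟩
      exact ⟨_, (rootedSum_R_some_iff ..).2 ⟨y, rfl, hy⟩, (ih y).2 hsat⟩
  | _ => simp_all [Model.sat, rootedSum]

theorem rootedSum_trans (htr : tr)
    (hF : ∀ i, ∀ x y z : (F i).M.W, (F i).M.R x y → (F i).M.R y z → (F i).M.R x z) :
    ∀ a b c : (rootedSum F tr rf V₀).W, (rootedSum F tr rf V₀).R a b →
      (rootedSum F tr rf V₀).R b c → (rootedSum F tr rf V₀).R a c := by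
  intro a b c hab hbc
  cases hab with
  | root_root => exact hbc
  | root_pt i =>
    obtain ⟨z, rfl, hz⟩ := (rootedSum_R_some_iff ..).1 hbc
    exact .root_succ i z htr hz
  | root_succ i y _ hy =>
    obtain ⟨z, rfl, hz⟩ := (rootedSum_R_some_iff ..).1 hbc
    exact .root_succ i z htr (hF i _ _ _ hy hz)
  | inner i x y hxy =>
    obtain ⟨z, rfl, hz⟩ := (rootedSum_R_some_iff ..).1 hbc
    exact .inner i x z (hF i _ _ _ hxy hz)

theorem rootedSum_serial [Nonempty ι] (hF : ∀ i, ∀ x : (F i).M.W, ∃ y, (F i).M.R x y) :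
    ∀ a : (rootedSum F tr rf V₀).W, ∃ b, (rootedSum F tr rf V₀).R a b
  | none => ⟨_, .root_pt (Classical.arbitrary ι)⟩
  | some ⟨i, x⟩ =>
    have ⟨y, hy⟩ := hF i x
    ⟨_, .inner i x y hy⟩

theorem rootedSum_refl (hrf : rf) (hF : ∀ i, ∀ x : (F i).M.W, (F i).M.R x x) :
    ∀ a : (rootedSum F tr rf V₀).W, (rootedSum F tr rf V₀).R a a
  | none => .root_root hrf
  | some ⟨i, x⟩ => .inner i x x (hF i x)

theorem rootedSum_isFor {l : Logic} (hl : l = Logic.K ∨ l = Logic.K4 ∨ l = Logic.KD4 ∨ l = Logic.S4)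
    (hF : ∀ i, (F i).M.IsFor l) (hne : l = Logic.KD4 → Nonempty ι) :
    (rootedSum F (l ≠ Logic.K) (l = Logic.S4) V₀).IsFor l := by
  rcases hl with rfl | rfl | rfl | rfl
  · exact ⟨trivial, by simp [Logic.K]⟩
  · exact ⟨rootedSum_trans _ _ _ _ (by decide) fun i => (hF i).1, by simp [Logic.K4]⟩
  · have := hne rfl
    exact ⟨⟨rootedSum_serial _ _ _ _ fun i => (hF i).1.1,
      rootedSum_trans _ _ _ _ (by decide) fun i => (hF i).1.2⟩, by simp [Logic.KD4]⟩
  · exact ⟨⟨rootedSum_refl _ _ _ _ rfl fun i => (hF i).1.1,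
      rootedSum_trans _ _ _ _ (by decide) fun i => (hF i).1.2⟩, by simp [Logic.S4]⟩

end RootedSum

section ViewModel

variable {l : Logic} {P : Finset ℕ} {S : View}

theorem rootedSum_sat_of_mem_parent {tr rf : Prop} (hS : ViewLComplete l P S)
    (hp : Satisfiable l (th S.parent)) (F : S.children → PointedModel)
    (hF : ∀ i, (F i).M.sat (F i).pt (th i))
    (htr : tr → l.base = .K4 ∨ l.base = .KD4 ∨ l.base = .S4)
    (hrf : rf → l.base = .T ∨ l.base = .S4) :
    ∀ η ∈ S.parent, (rootedSum F tr rf {p | Form.pos p ∈ S.parent}).sat none η := by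
  obtain ⟨⟨hand, hor, hrefl, -⟩, -, hdia, hbox, hboxtr, -⟩ := hS
  obtain ⟨M₀, -, w₀, hw₀⟩ := hp
  have hw₀ := (M₀.sat_th w₀ _).1 hw₀
  have hFmem : ∀ i η, η ∈ i.1 → (F i).M.sat (F i).pt η := fun i => (Model.sat_th _ _ _).1 (hF i)
  intro η
  induction η with
  | bot => exact fun h => hw₀ _ h
  | top => exact fun _ => trivial
  | pos p => exact id
  | npos p => exact fun h hpos => hw₀ _ h (hw₀ _ hpos)
  | and a b iha ihb => exact fun h => ⟨iha (hand a b h).1, ihb (hand a b h).2⟩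
  | or a b iha ihb => exact fun h => (hor a b h).imp iha ihb
  | box a ih =>
    intro h b hb
    cases hb with
    | root_pt i => exact (rootedSum_sat_some ..).2 (hFmem i a (hbox a h i i.2))
    | root_succ i y htr' hy =>
      exact (rootedSum_sat_some ..).2 (hFmem i _ (hboxtr (htr htr') a h i i.2) y hy)
    | root_root hrf' => exact ih (hrefl (hrf hrf') a h)
  | dia a ih =>
    intro h
    obtain ⟨c, hc, hac⟩ := hdia a h
    exact ⟨_, .root_pt ⟨c, hc⟩, (rootedSum_sat_some ..).2 (hFmem _ a hac)⟩

abbrev viewModel (l : Logic) (S : View) (F : S.children → PointedModel) : Model :=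
  rootedSum F (l ≠ Logic.K) (l = Logic.S4) {p | Form.pos p ∈ S.parent}

theorem viewModel_isFor_and_sat_parent
    (hl : l = Logic.K ∨ l = Logic.K4 ∨ l = Logic.KD4 ∨ l = Logic.S4) (hS : ViewLComplete l P S)
    (hp : Satisfiable l (th S.parent)) (F : S.children → PointedModel)
    (hF : ∀ i, (F i).M.IsFor l ∧ (F i).M.sat (F i).pt (th i)) :
    (viewModel l S F).IsFor l ∧ (viewModel l S F).sat none (th S.parent) := by
  refine ⟨rootedSum_isFor _ _ hl (fun i => (hF i).1) ?_, (Model.sat_th _ _ _).2 ?_⟩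
  · rintro rfl
    exact (hS.2.2.2.2.2 rfl).to_subtype
  · refine rootedSum_sat_of_mem_parent hS hp F (fun i => (hF i).2) ?_ ?_
    · rcases hl with rfl | rfl | rfl | rfl <;> simp [Logic.K, Logic.K4, Logic.KD4, Logic.S4]
    · rintro rfl
      exact Or.inr rfl

theorem exists_children_models (hcons : ViewConsistent l S) :
    ∃ G : S.children → PointedModel, ∀ i, (G i).M.IsFor l ∧ (G i).M.sat (G i).pt (th i) := by
  choose M hM w hw using fun i : S.children => hcons.2 i i.2
  exact ⟨fun i => ⟨M i, w i⟩, fun i => ⟨hM i, hw i⟩⟩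

theorem exists_sat_parent_successor_equiv
    (hl : l = Logic.K ∨ l = Logic.K4 ∨ l = Logic.KD4 ∨ l = Logic.S4) (hS : ViewLComplete l P S)
    (hcons : ViewConsistent l S) {c : Finset Form} (hc : c ∈ S.children) {N : Model}
    (hN : N.IsFor l) {v : N.W} (hv : N.sat v (th c)) :
    ∃ M : Model, M.IsFor l ∧
      ∃ r u, M.sat r (th S.parent) ∧ M.R r u ∧ ∀ χ, M.sat u χ ↔ N.sat v χ := by
  obtain ⟨G, hG⟩ := exists_children_models hcons
  set F := Function.update G ⟨c, hc⟩ ⟨N, v⟩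
  have hF : ∀ i, (F i).M.IsFor l ∧ (F i).M.sat (F i).pt (th i) := by
    intro i
    by_cases hi : i = ⟨c, hc⟩
    · subst hi
      rw [show F ⟨c, hc⟩ = ⟨N, v⟩ from Function.update_self ..]
      exact ⟨hN, hv⟩
    · rw [show F i = G i from Function.update_of_ne hi ..]
      exact hG i
  obtain ⟨hM, hr⟩ := viewModel_isFor_and_sat_parent hl hS hcons.1 F hF
  refine ⟨_, hM, none, some ⟨⟨c, hc⟩, (F ⟨c, hc⟩).pt⟩, hr, .root_pt _, fun χ => ?_⟩
  rw [rootedSum_sat_some, show F ⟨c, hc⟩ = ⟨N, v⟩ from Function.update_self ..]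

theorem exists_sat_parent_subsingleton_of_kMaxChild {φ : Form} (hS : ViewLComplete Logic.K P S)
    (hcons : ViewConsistent Logic.K S) {d : ℕ} (hmax : ∀ a ∈ S.children, KMaxChild φ d a)
    {c : Finset Form} (hc : c ∈ S.children) :
    ∃ M : Model, M.IsFor Logic.K ∧
      ∃ r, M.sat r (th S.parent) ∧ {u | M.R r u ∧ M.sat u (th c)}.Subsingleton := by
  obtain ⟨G, hG⟩ := exists_children_models hcons
  obtain ⟨hM, hr⟩ := viewModel_isFor_and_sat_parent (by simp) hS hcons.1 G hG
  refine ⟨_, hM, none, hr, ?_⟩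
  have hsucc : ∀ u, (viewModel Logic.K S G).R none u → (viewModel Logic.K S G).sat u (th c) →
      u = some ⟨⟨c, hc⟩, (G ⟨c, hc⟩).pt⟩ := by
    rintro u (⟨i⟩ | ⟨i, y, htr⟩ | ⟨hrf⟩ | _) hu
    · have hic := (hmax i i.2).eq_of_sat_th (hmax c hc) (hG i).2 ((rootedSum_sat_some ..).1 hu)
      obtain rfl : i = ⟨c, hc⟩ := Subtype.ext hic
      rfl
    · exact absurd rfl htr
    · exact absurd hrf (by decide)
  exact fun u hu u' hu' => (hsucc u hu.1 hu.2).trans (hsucc u' hu'.1 hu'.2).symm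

end ViewModel

theorem Model.IsFor.trans {M : Model} {l : Logic}
    (hl : l = Logic.K4 ∨ l = Logic.KD4 ∨ l = Logic.S4) (hM : M.IsFor l) :
    ∀ a b c, M.R a b → M.R b c → M.R a c := by
  rcases hl with rfl | rfl | rfl
  exacts [hM.1, hM.1.2, hM.1.2]

section Canonical

variable (l : Logic) (φ : Form)

def maxStates : Set (Finset Form) := {a | MaxState l φ a}

instance : Finite (maxStates l φ) :=
  (φ.subBar.powerset.finite_toSet.subset fun _ ha => Finset.mem_powerset.2 ha.1).to_subtype

def canonicalModel (hne : (maxStates l φ).Nonempty) : Model where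
  W := maxStates l φ
  nonempty := hne.to_subtype
  finite := inferInstance
  R a b := ∀ χ, Form.box χ ∈ a.1 → χ ∈ b.1 ∧ Form.box χ ∈ b.1
  V a := {p | Form.pos p ∈ a.1}

open Classical in
noncomputable def theoryAt (M : Model) (w : M.W) : Finset Form :=
  φ.subBar.filter (M.sat w ·)

variable {l φ}

theorem mem_theoryAt {M : Model} {w : M.W} {η : Form} :
    η ∈ theoryAt φ M w ↔ η ∈ φ.subBar ∧ M.sat w η := by
  simp [theoryAt]

theorem maxState_theoryAt {M : Model} (hM : M.IsFor l) (w : M.W) :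
    MaxState l φ (theoryAt φ M w) := by
  refine ⟨fun η hη => (mem_theoryAt.1 hη).1,
    ⟨M, hM, w, (M.sat_th w _).2 fun η hη => (mem_theoryAt.1 hη).2⟩, fun ψ hψ => ?_⟩
  by_cases h : M.sat w ψ
  · exact Or.inl (mem_theoryAt.2 ⟨Form.mem_subBar_iff.2 (Or.inl hψ), h⟩)
  · exact Or.inr (mem_theoryAt.2 ⟨Form.mem_subBar_iff.2 (Or.inr (by simpa using hψ)),
      (M.sat_neg ψ w).2 h⟩)

theorem subset_theoryAt {M : Model} {w : M.W} {a : Finset Form} (ha : a ⊆ φ.subBar)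
    (hw : M.sat w (th a)) : a ⊆ theoryAt φ M w :=
  fun η hη => mem_theoryAt.2 ⟨ha hη, (M.sat_th w a).1 hw η hη⟩

theorem MaxState.exists_model_of_mem {a : Finset Form} (ha : MaxState l φ a) {η : Form}
    (hη : η ∈ a) :
    ∃ M : Model, M.IsFor l ∧ ∃ w, M.sat w (th a) ∧ M.sat w η ∧
      ∀ ν ∈ η.subf, M.sat w ν → ν ∈ a := by
  obtain ⟨M, hM, w, hw⟩ := ha.2.1
  exact ⟨M, hM, w, hw, (M.sat_th w a).1 hw η hη,
    fun ν hν => ha.mem_of_sat (Form.subf_subset_subBar (ha.1 hη) hν) hw⟩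

theorem box_mem_theoryAt {M : Model} (htrans : ∀ a b c, M.R a b → M.R b c → M.R a c)
    {w y : M.W} {a : Finset Form} (ha : a ⊆ φ.subBar) (hw : M.sat w (th a)) (hwy : M.R w y)
    {χ : Form} (hχ : Form.box χ ∈ a) : χ ∈ theoryAt φ M y ∧ Form.box χ ∈ theoryAt φ M y := by
  have hbox : M.sat w (Form.box χ) := (M.sat_th w a).1 hw _ hχ
  refine ⟨mem_theoryAt.2 ⟨Form.subf_subset_subBar (ha hχ) ?_, hbox y hwy⟩,
    mem_theoryAt.2 ⟨ha hχ, fun z hyz => hbox z (htrans _ _ _ hwy hyz)⟩⟩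
  simp [Form.subf, Form.mem_subf_self]

variable (hne : (maxStates l φ).Nonempty)

theorem canonicalModel_sat_of_mem (hl : l = Logic.K4 ∨ l = Logic.KD4 ∨ l = Logic.S4) (η : Form) :
    ∀ a : maxStates l φ, η ∈ a.1 → (canonicalModel l φ hne).sat a η := by
  induction η with
  | bot =>
    intro a h
    obtain ⟨M, -, w, -, hη, -⟩ := a.2.exists_model_of_mem h
    exact hη.elim
  | top => exact fun _ _ => trivial
  | pos p => exact fun _ h => h
  | npos p =>
    intro a h hpos
    obtain ⟨M, -, w, hw, hη, -⟩ := a.2.exists_model_of_mem h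
    exact hη ((M.sat_th w _).1 hw _ hpos)
  | and x y ihx ihy =>
    intro a h
    obtain ⟨M, -, w, -, ⟨hx, hy⟩, hsub⟩ := a.2.exists_model_of_mem h
    exact ⟨ihx a (hsub x (by simp [Form.subf]) hx), ihy a (hsub y (by simp [Form.subf]) hy)⟩
  | or x y ihx ihy =>
    intro a h
    obtain ⟨M, -, w, -, hxy, hsub⟩ := a.2.exists_model_of_mem h
    exact hxy.imp (fun hx => ihx a (hsub x (by simp [Form.subf]) hx))
      fun hy => ihy a (hsub y (by simp [Form.subf]) hy)
  | box x ih => exact fun a h b hb => ih b (hb x h).1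
  | dia x ih =>
    intro a h
    obtain ⟨M, hM, w, hw, ⟨y, hwy, hy⟩, -⟩ := a.2.exists_model_of_mem h
    refine ⟨⟨theoryAt φ M y, maxState_theoryAt hM y⟩,
      fun χ hχ => box_mem_theoryAt (hM.trans hl) a.2.1 hw hwy hχ, ih _ ?_⟩
    exact mem_theoryAt.2 ⟨Form.subf_subset_subBar (a.2.1 h) (by simp [Form.subf]), hy⟩

theorem canonicalModel_isFor (hl : l = Logic.K4 ∨ l = Logic.KD4 ∨ l = Logic.S4) :
    (canonicalModel l φ hne).IsFor l := by
  have htrans : ∀ a b c, (canonicalModel l φ hne).R a b → (canonicalModel l φ hne).R b c →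
      (canonicalModel l φ hne).R a c := fun _ _ _ hab hbc χ hχ => hbc χ (hab χ hχ).2
  rcases hl with rfl | rfl | rfl
  · exact ⟨htrans, by simp [Logic.K4]⟩
  · refine ⟨⟨fun a => ?_, htrans⟩, by simp [Logic.KD4]⟩
    obtain ⟨M, hM, w, hw⟩ := a.2.2.1
    obtain ⟨y, hwy⟩ := hM.1.1 w
    exact ⟨⟨theoryAt φ M y, maxState_theoryAt hM y⟩,
      fun χ hχ => box_mem_theoryAt (hM.trans (by simp)) a.2.1 hw hwy hχ⟩
  · refine ⟨⟨fun a χ hχ => ⟨?_, hχ⟩, htrans⟩, by simp [Logic.S4]⟩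
    obtain ⟨M, hM, w, -, hbox, hsub⟩ := a.2.exists_model_of_mem hχ
    exact hsub χ (by simp [Form.subf]) (hbox w (hM.1.1 w))

theorem canonicalModel_eq_of_sat_th (hl : l = Logic.K4 ∨ l = Logic.KD4 ∨ l = Logic.S4)
    (a b : maxStates l φ) (h : (canonicalModel l φ hne).sat a (th b.1)) : a = b :=
  Subtype.ext <| a.2.eq_of_sat_th b.2
    ((Model.sat_th _ _ _).2 fun η hη => canonicalModel_sat_of_mem hne hl η a hη) h

end Canonical

theorem exists_sat_subsingleton_of_maxState {l : Logic} {φ : Form}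
    (hl : l = Logic.K4 ∨ l = Logic.KD4 ∨ l = Logic.S4) {p c : Finset Form} (hp : p ⊆ φ.subBar)
    (hsat : Satisfiable l (th p)) (hc : MaxState l φ c) :
    ∃ M : Model, M.IsFor l ∧
      ∃ r, M.sat r (th p) ∧ {u | M.R r u ∧ M.sat u (th c)}.Subsingleton := by
  obtain ⟨M₀, hM₀, w₀, hw₀⟩ := hsat
  let r : maxStates l φ := ⟨theoryAt φ M₀ w₀, maxState_theoryAt hM₀ w₀⟩
  refine ⟨canonicalModel l φ ⟨c, hc⟩, canonicalModel_isFor _ hl, r, ?_, ?_⟩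
  · exact (Model.sat_th _ _ _).2 fun η hη =>
      canonicalModel_sat_of_mem _ hl η r (subset_theoryAt hp hw₀ hη)
  · rintro u ⟨-, hu⟩ u' ⟨-, hu'⟩
    exact (canonicalModel_eq_of_sat_th _ hl u ⟨c, hc⟩ hu).trans
      (canonicalModel_eq_of_sat_th _ hl u' ⟨c, hc⟩ hu').symm

theorem vars_th_child_subset {l : Logic} {φ : Form} {S : View} (hWF : S.WF φ)
    (hS : ViewLComplete l φ.vars S) {c : Finset Form} (hc : c ∈ S.children) :
    (th c).vars ⊆ (th S.parent).vars := by
  refine (vars_th_subset fun η hη => Form.vars_subset_of_mem_subBar (hWF.2 c hc hη)).trans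
    fun p hp => ?_
  rcases hS.1.2.2.2 p hp with h | h <;> exact vars_subset_vars_th h (by simp [Form.vars])

/-- for a consistent view S that completes itself, if th(p(S))
is complete for l, then th(c) is complete for l for every child c ∈ C(S). -/
theorem stmt14 (l : Logic)
    (hl : l = Logic.K ∨ l = Logic.K4 ∨ l = Logic.KD4 ∨ l = Logic.S4)
    (φ : Form) (S : View) (hWF : S.WF φ)
    (hcons : ViewConsistent l S) (hself : ViewCompletes l φ S S)
    (hcomp : Complete l (th S.parent)) :
    ∀ c ∈ S.children, Complete l (th c) := by
  obtain ⟨hS, -, -, hKmax, hMax⟩ := hself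
  intro c hc
  refine hcomp.of_successor (vars_th_child_subset hWF hS hc)
    (fun N hN v hv => exists_sat_parent_successor_equiv hl hS hcons hc hN hv) ?_
  rcases hl with rfl | hl
  · exact exists_sat_parent_subsingleton_of_kMaxChild hS hcons (hKmax rfl) hc
  · have hK : l.base ≠ .K := by rcases hl with rfl | rfl | rfl <;> decide
    exact exists_sat_subsingleton_of_maxState hl hWF.1 hcons.1 (hMax hK c hc)
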